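/- arXiv:2011.07840 — 2 statements merged into one kernel-verified Lean document; each statement's English description precedes it below -/
import Mathlib

section
/- Let F, G : ℝ^m → ℝ be C², with F strictly convex and coercive with unique critical point x*, and suppose the gradient flow S_t of F exists globally with S_t(x) → x* and |∇F(S_t(x))| → 0 as t → ∞. Assume the convexity condition ∇F·(∇²F ∇F) ≥ -ρ ∇F·∇G holds uniformly on ℝ^m for some ρ > 0. Then for every x ∈ ℝ^m, G(x*) ≤ (1/(2ρ))|∇F(x)|² + G(x). -/
open Filter
open scoped RealInnerProductSpace

/-- Let `F, G : ℝ^m → ℝ` be `C²`, with `F` strictly convex and coercive with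
unique critical point `x*`; suppose the gradient flow `S_t` of `F` exists globally with
`S_t(x) → x*` and `|∇F(S_t(x))| → 0` as `t → ∞`. If
`∇F·(∇²F ∇F) ≥ -ρ ∇F·∇G` uniformly for some `ρ > 0`, then
`G(x*) ≤ (1/(2ρ))|∇F(x)|² + G(x)` for every `x`. -/
theorem convexity_inequality_along_gradient_flow
    (m : ℕ) (hm : 1 ≤ m) (F G : EuclideanSpace ℝ (Fin m) → ℝ)
    (hF : ContDiff ℝ 2 F) (hG : ContDiff ℝ 2 G)
    (hconv : StrictConvexOn ℝ Set.univ F)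
    (hcoer : Tendsto F (cocompact (EuclideanSpace ℝ (Fin m))) atTop)
    (xstar : EuclideanSpace ℝ (Fin m))
    (hcrit : gradient F xstar = 0)
    (huniq : ∀ y, gradient F y = 0 → y = xstar)
    (ρ : ℝ) (hρ : 0 < ρ)
    (hcond : ∀ x, -ρ * ⟪gradient F x, gradient G x⟫ ≤
      ⟪gradient F x, fderiv ℝ (gradient F) x (gradient F x)⟫)
    (S : EuclideanSpace ℝ (Fin m) → ℝ → EuclideanSpace ℝ (Fin m))
    (hS0 : ∀ x, S x 0 = x)
    (hSflow : ∀ x, ∀ t ∈ Set.Ici (0 : ℝ), HasDerivAt (S x) (-(gradient F (S x t))) t)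
    (hSconv : ∀ x, Tendsto (S x) atTop (nhds xstar))
    (hSgrad : ∀ x, Tendsto (fun t => ‖gradient F (S x t)‖) atTop (nhds 0)) :
    ∀ x, G xstar ≤ 1 / (2 * ρ) * ‖gradient F x‖ ^ 2 + G x := by
  intro x
  -- gradient F is C¹
  have hgradF : ContDiff ℝ 1 (gradient F) := by
    have h1 : ContDiff ℝ 1 (fderiv ℝ F) := hF.fderiv_right (by norm_num)
    have heq : gradient F = fun y =>
        (InnerProductSpace.toDual ℝ (EuclideanSpace ℝ (Fin m))).symm (fderiv ℝ F y) := rfl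
    rw [heq]
    exact (InnerProductSpace.toDual ℝ (EuclideanSpace ℝ (Fin m))).symm.contDiff.comp h1
  have hgradFdiff : Differentiable ℝ (gradient F) := hgradF.differentiable one_ne_zero
  set v : ℝ → EuclideanSpace ℝ (Fin m) := fun t => gradient F (S x t) with hv
  set φ : ℝ → ℝ := fun t => 1 / (2 * ρ) * ⟪v t, v t⟫ + G (S x t) with hφ
  -- derivative of φ on Ici 0
  have hderiv : ∀ t ∈ Set.Ici (0 : ℝ),
      HasDerivAt φ (1 / (2 * ρ) * (2 * ⟪v t, fderiv ℝ (gradient F) (S x t) (-(v t))⟫)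
        + ⟪gradient G (S x t), -(v t)⟫) t := by
    intro t ht
    have hS := hSflow x t ht
    have hv' : HasDerivAt v (fderiv ℝ (gradient F) (S x t) (-(v t))) t :=
      ((hgradFdiff (S x t)).hasFDerivAt).comp_hasDerivAt t hS
    have hinner : HasDerivAt (fun t => ⟪v t, v t⟫)
        (⟪v t, fderiv ℝ (gradient F) (S x t) (-(v t))⟫
          + ⟪fderiv ℝ (gradient F) (S x t) (-(v t)), v t⟫) t :=
      HasDerivAt.inner ℝ hv' hv'
    have hGd : HasGradientAt G (gradient G (S x t)) (S x t) :=
      ((hG.differentiable (by norm_num)) (S x t)).hasGradientAt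
    have hGc : HasDerivAt (fun t => G (S x t)) (⟪gradient G (S x t), -(v t)⟫) t := by
      have := hGd.hasFDerivAt.comp_hasDerivAt t hS
      rw [InnerProductSpace.toDual_apply_apply] at this; exact this
    have := (hinner.const_mul (1 / (2 * ρ))).add hGc
    refine this.congr_deriv ?_
    rw [real_inner_comm (fderiv ℝ (gradient F) (S x t) (-(v t))) (v t)]
    ring
  -- the derivative is nonpositive
  have hnonpos : ∀ t ∈ Set.Ici (0 : ℝ),
      1 / (2 * ρ) * (2 * ⟪v t, fderiv ℝ (gradient F) (S x t) (-(v t))⟫)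
        + ⟪gradient G (S x t), -(v t)⟫ ≤ 0 := by
    intro t _
    have key : -ρ * ⟪v t, gradient G (S x t)⟫ ≤
        ⟪v t, fderiv ℝ (gradient F) (S x t) (v t)⟫ := hcond (S x t)
    have hmap : fderiv ℝ (gradient F) (S x t) (-(v t))
        = -(fderiv ℝ (gradient F) (S x t) (v t)) := by rw [map_neg]
    rw [hmap, inner_neg_right, inner_neg_right]
    set A := ⟪v t, fderiv ℝ (gradient F) (S x t) (v t)⟫ with hA
    have hBB : ⟪gradient G (S x t), v t⟫ = ⟪v t, gradient G (S x t)⟫ := real_inner_comm _ _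
    rw [hBB]
    set B := ⟪v t, gradient G (S x t)⟫ with hB
    have h1 : -B ≤ A / ρ := (le_div_iff₀ hρ).2 (by linarith [key, (by ring : -B * ρ = -ρ * B)])
    have h2 : 1 / (2 * ρ) * (2 * -A) = -(A / ρ) := by field_simp
    linarith [h1, h2.le, h2.ge]
  -- φ is antitone on Ici 0
  have hcont : ContinuousOn φ (Set.Ici 0) := fun t ht =>
    (hderiv t ht).continuousAt.continuousWithinAt
  have hanti : AntitoneOn φ (Set.Ici 0) := by
    apply antitoneOn_of_deriv_nonpos (convex_Ici 0) hcont
    · intro t ht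
      rw [interior_Ici] at ht
      exact ((hderiv t (Set.mem_Ici.2 (le_of_lt ht))).differentiableAt).differentiableWithinAt
    · intro t ht
      rw [interior_Ici] at ht
      rw [(hderiv t (Set.mem_Ici.2 (le_of_lt ht))).deriv]
      exact hnonpos t (Set.mem_Ici.2 (le_of_lt ht))
  have hle : ∀ t ∈ Set.Ici (0:ℝ), φ t ≤ φ 0 :=
    fun t ht => hanti (Set.self_mem_Ici) ht ht
  -- limit of φ is G xstar
  have hlim : Tendsto φ atTop (nhds (G xstar)) := by
    have h1 : Tendsto (fun t => ⟪v t, v t⟫) atTop (nhds 0) := by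
      have h := (hSgrad x).mul (hSgrad x)
      rw [mul_zero] at h
      refine h.congr fun t => ?_
      rw [← real_inner_self_eq_norm_mul_norm]
    have h2 : Tendsto (fun t => G (S x t)) atTop (nhds (G xstar)) :=
      (hG.continuous.tendsto xstar).comp (hSconv x)
    have h3 := (h1.const_mul (1 / (2 * ρ))).add h2
    rw [mul_zero, zero_add] at h3
    exact h3
  have hfinal : G xstar ≤ φ 0 :=
    le_of_tendsto hlim (eventually_atTop.2 ⟨0, fun t ht => hle t ht⟩)
  have hφ0 : φ 0 = 1 / (2 * ρ) * ‖gradient F x‖ ^ 2 + G x := by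
    have : v 0 = gradient F x := by rw [hv]; simp [hS0]
    rw [hφ]
    simp only [this, hS0, real_inner_self_eq_norm_sq]
  rw [hφ0] at hfinal
  exact hfinal
end

section
/- Let F, G : ℝ^m → ℝ be C², F strictly convex with unique critical point x*, and assume (∇F)ᵀ(∇²F)(∇F) ≥ -ρ(∇F)·(∇G) everywhere for some ρ > 0. Let A > 1/(2ρ) and suppose x̄ minimizes x ↦ A|∇F(x)|² + G(x) over ℝ^m. Then x̄ = x* and hence G(x*) ≤ A|∇F(x)|² + G(x) for all x. -/
open scoped RealInnerProductSpace
open Set Metric Filter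

section Helpers

variable {E : Type*} [NormedAddCommGroup E] [InnerProductSpace ℝ E]

/-- If a real function has a negative derivative at `0`, it takes a value strictly
below `h 0` at some point of `(0, ε)`. -/
lemma aux_exists_lt_of_hasDerivAt_neg {h : ℝ → ℝ} {d : ℝ} (hd : HasDerivAt h d 0)
    (hneg : d < 0) {ε : ℝ} (hε : 0 < ε) : ∃ t ∈ Set.Ioo (0:ℝ) ε, h t < h 0 := by
  have hs : Filter.Tendsto (slope h 0) (nhdsWithin 0 {(0:ℝ)}ᶜ) (nhds d) :=
    hasDerivAt_iff_tendsto_slope.mp hd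
  have h1 : ∀ᶠ t in nhdsWithin 0 {(0:ℝ)}ᶜ, slope h 0 t < 0 := hs.eventually_lt_const hneg
  have hle : nhdsWithin (0:ℝ) (Set.Ioi 0) ≤ nhdsWithin 0 {(0:ℝ)}ᶜ :=
    nhdsWithin_mono _ (fun t ht => ne_of_gt ht)
  have h2 : ∀ᶠ t in nhdsWithin (0:ℝ) (Set.Ioi 0), slope h 0 t < 0 := hle h1
  have h3 : ∀ᶠ t in nhdsWithin (0:ℝ) (Set.Ioi 0), t ∈ Set.Ioo (0:ℝ) ε :=
    Ioo_mem_nhdsGT hε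
  obtain ⟨t, hts, htm⟩ := (h2.and h3).exists
  refine ⟨t, htm, ?_⟩
  rw [slope_def_field, sub_zero] at hts
  have hnum : h t - h 0 < 0 := by
    by_contra hcon
    push_neg at hcon
    exact absurd (div_nonneg hcon (le_of_lt htm.1)) (not_le.mpr hts)
  linarith

/-- A convex differentiable function with vanishing derivative at a point attains
its global minimum there. -/
lemma aux_convex_min {F : E → ℝ} (hc : ConvexOn ℝ Set.univ F) {x : E}
    (hd : HasFDerivAt F (0 : E →L[ℝ] ℝ) x) (z : E) : F x ≤ F z := by
  by_contra hz
  push_neg at hz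
  set δ : ℝ := F x - F z with hδ
  have hδpos : 0 < δ := sub_pos.mpr hz
  -- the curve t ↦ x + t • (z - x)
  have hcurve : ∀ t : ℝ, HasDerivAt (fun s : ℝ => x + s • (z - x)) (z - x) t := by
    intro t
    simpa using ((hasDerivAt_id t).smul_const (z - x)).const_add x
  have hφ : HasDerivAt (fun s : ℝ => F (x + s • (z - x))) 0 0 := by
    have h0 : HasFDerivAt F (0 : E →L[ℝ] ℝ) ((fun s : ℝ => x + s • (z - x)) 0) := by
      simpa using hd
    have h := h0.comp_hasDerivAt 0 (hcurve 0)
    simp only [ContinuousLinearMap.zero_apply] at h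
    exact h
  have hs : Filter.Tendsto (slope (fun s : ℝ => F (x + s • (z - x))) 0)
      (nhdsWithin 0 {(0:ℝ)}ᶜ) (nhds 0) := hasDerivAt_iff_tendsto_slope.mp hφ
  have h1 : ∀ᶠ t in nhdsWithin (0:ℝ) (Set.Ioi 0),
      -δ < slope (fun s : ℝ => F (x + s • (z - x))) 0 t :=
    (nhdsWithin_mono _ (fun t ht => ne_of_gt ht))
      (hs.eventually_const_lt (by linarith))
  have h2 : ∀ᶠ t in nhdsWithin (0:ℝ) (Set.Ioi 0), t ∈ Set.Ioo (0:ℝ) 1 :=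
    Ioo_mem_nhdsGT one_pos
  obtain ⟨t, ht1, ht2⟩ := (h1.and h2).exists
  -- convexity bound
  have hconv2 := hc.2 (Set.mem_univ x) (Set.mem_univ z)
    (show (0:ℝ) ≤ 1 - t by linarith [ht2.2]) (le_of_lt ht2.1)
    (show (1 - t) + t = 1 by ring)
  have hpt : (1 - t) • x + t • z = x + t • (z - x) := by
    rw [smul_sub, sub_smul, one_smul]; abel
  rw [hpt] at hconv2
  have hslope : slope (fun s : ℝ => F (x + s • (z - x))) 0 t ≤ -δ := by
    rw [slope_def_field]
    simp only [zero_smul, add_zero, sub_zero]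
    rw [div_le_iff₀ ht2.1]
    have : F (x + t • (z - x)) ≤ (1 - t) * F x + t * F z := by
      simpa [smul_eq_mul] using hconv2
    nlinarith [ht2.1]
  linarith

end Helpers

set_option maxHeartbeats 1600000 in
/-- Let `F, G : ℝ^m → ℝ` be `C²`, `F` strictly convex with unique critical
point `x*`, and assume `(∇F)ᵀ(∇²F)(∇F) ≥ -ρ(∇F)·(∇G)` everywhere for some `ρ > 0`.
Let `A > 1/(2ρ)` and suppose `x̄` minimizes `x ↦ A|∇F(x)|² + G(x)` over `ℝ^m`
(so that the Euler–Lagrange equation `2A∇²F(x̄)∇F(x̄) + ∇G(x̄) = 0` holds).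
Then `x̄ = x*` and hence `G(x*) ≤ A|∇F(x)|² + G(x)` for all `x`. -/
theorem minimizer_is_critical_point_of_F
    (m : ℕ) (hm : 1 ≤ m) (F G : EuclideanSpace ℝ (Fin m) → ℝ)
    (hF : ContDiff ℝ 2 F) (hG : ContDiff ℝ 2 G)
    (hconv : StrictConvexOn ℝ Set.univ F)
    (xstar : EuclideanSpace ℝ (Fin m))
    (hcrit : gradient F xstar = 0)
    (huniq : ∀ y, gradient F y = 0 → y = xstar)
    (ρ : ℝ) (hρ : 0 < ρ)
    (hcond : ∀ x, -ρ * ⟪gradient F x, gradient G x⟫ ≤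
      ⟪gradient F x, fderiv ℝ (gradient F) x (gradient F x)⟫)
    (A : ℝ) (hA : 1 / (2 * ρ) < A)
    (xbar : EuclideanSpace ℝ (Fin m))
    (hxbar : ∀ x, A * ‖gradient F xbar‖ ^ 2 + G xbar ≤ A * ‖gradient F x‖ ^ 2 + G x)
    (hEL : (2 * A) • fderiv ℝ (gradient F) xbar (gradient F xbar) + gradient G xbar = 0) :
    xbar = xstar ∧ ∀ x, G xstar ≤ A * ‖gradient F x‖ ^ 2 + G x := by
  classical
  have hF1 : ContDiff ℝ 1 F := hF.of_le one_le_two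
  have hFd : Differentiable ℝ F := hF1.differentiable one_ne_zero
  have hGd : Differentiable ℝ G := (hG.of_le one_le_two).differentiable one_ne_zero
  have hg : ContDiff ℝ 1 (gradient F) := by
    have h1 : ContDiff ℝ 1 (fun z => fderiv ℝ F z) := hF.fderiv_right (by norm_num)
    have h2 : ContDiff ℝ 1 (fun L : EuclideanSpace ℝ (Fin m) →L[ℝ] ℝ => (InnerProductSpace.toDual ℝ (EuclideanSpace ℝ (Fin m))).symm L) :=
      (InnerProductSpace.toDual ℝ (EuclideanSpace ℝ (Fin m))).symm.contDiff
    exact h2.comp h1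
  have hgc : Continuous (gradient F) := hg.continuous
  have hgGc : Continuous (gradient G) := by
    have h1 : ContDiff ℝ 1 (fun z => fderiv ℝ G z) := hG.fderiv_right (by norm_num)
    have h2 : ContDiff ℝ 1 (fun L : EuclideanSpace ℝ (Fin m) →L[ℝ] ℝ => (InnerProductSpace.toDual ℝ (EuclideanSpace ℝ (Fin m))).symm L) :=
      (InnerProductSpace.toDual ℝ (EuclideanSpace ℝ (Fin m))).symm.contDiff
    exact (h2.comp h1).continuous
  -- x* is a global minimum of F
  have hminF : ∀ z, F xstar ≤ F z := by
    intro z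
    have hd0 : HasFDerivAt F (0 : EuclideanSpace ℝ (Fin m) →L[ℝ] ℝ) xstar := by
      have h := (hFd xstar).hasGradientAt
      rw [hcrit] at h
      simpa using h.hasFDerivAt
    exact aux_convex_min hconv.convexOn hd0 z
  have hstrictF : ∀ z, z ≠ xstar → F xstar < F z := by
    intro z hz
    rcases lt_or_eq_of_le (hminF z) with h | h
    · exact h
    · exfalso
      have hmid := hconv.2 (Set.mem_univ z) (Set.mem_univ xstar) hz
        (by norm_num : (0:ℝ) < 1/2) (by norm_num : (0:ℝ) < 1/2) (by norm_num)
      rw [← h] at hmid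
      have : F xstar ≤ F ((1/2 : ℝ) • z + (1/2 : ℝ) • xstar) := hminF _
      simp only [smul_eq_mul] at hmid
      nlinarith
  -- minimum of F on the unit sphere around x*
  obtain ⟨w₀, hw₀s, hw₀min⟩ := (isCompact_sphere xstar (1:ℝ)).exists_isMinOn
    ⟨xstar + EuclideanSpace.single ⟨0, hm⟩ (1:ℝ), by
      rw [mem_sphere_iff_norm, add_sub_cancel_left, EuclideanSpace.norm_single]
      norm_num⟩
    hF1.continuous.continuousOn
  set δ : ℝ := F w₀ - F xstar with hδdef
  have hδpos : 0 < δ := by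
    have : w₀ ≠ xstar := by
      intro h
      rw [mem_sphere_iff_norm, h] at hw₀s
      simp at hw₀s
    have := hstrictF w₀ this
    simp only [hδdef]
    linarith
  -- sublevel sets of F are bounded
  have hcoerc : ∀ z : EuclideanSpace ℝ (Fin m), F z ≤ F xbar → ‖z - xstar‖ ≤ max 1 ((F xbar - F xstar)/δ) := by
    intro z hz
    by_contra hcon
    push_neg at hcon
    have hd1 : (1:ℝ) < ‖z - xstar‖ := lt_of_le_of_lt (le_max_left _ _) hcon
    set d : ℝ := ‖z - xstar‖ with hddef
    have hdpos : (0:ℝ) < d := by linarith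
    set t : ℝ := 1/d with htdef
    have htpos : 0 < t := by positivity
    have htle : t ≤ 1 := by
      rw [htdef, div_le_one hdpos]; linarith
    have hw : (1 - t) • xstar + t • z ∈ sphere xstar (1:ℝ) := by
      rw [mem_sphere_iff_norm]
      have : (1 - t) • xstar + t • z - xstar = t • (z - xstar) := by
        rw [smul_sub, sub_smul, one_smul]; abel
      rw [this, norm_smul]
      simp only [Real.norm_eq_abs, abs_of_pos htpos]
      rw [htdef]
      field_simp
      rfl
    have hconv2 := hconv.convexOn.2 (Set.mem_univ xstar) (Set.mem_univ z)
      (by linarith : (0:ℝ) ≤ 1 - t) (le_of_lt htpos) (by ring : (1 - t) + t = 1)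
    have hsphere_bd : F xstar + δ ≤ F ((1 - t) • xstar + t • z) := by
      have h := isMinOn_iff.mp hw₀min _ hw
      simp only [hδdef]
      linarith
    simp only [smul_eq_mul] at hconv2
    -- δ ≤ t * (F z - F xstar)
    have h1 : δ ≤ t * (F z - F xstar) := by nlinarith
    have h2 : d * δ ≤ F z - F xstar := by
      have := mul_le_mul_of_nonneg_left h1 (le_of_lt hdpos)
      calc d * δ ≤ d * (t * (F z - F xstar)) := this
        _ = F z - F xstar := by rw [htdef]; field_simp
    have h3 : d ≤ (F xbar - F xstar)/δ := by
      rw [le_div_iff₀ hδpos]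
      nlinarith
    exact absurd h3 (not_le.mpr (lt_of_le_of_lt (le_max_right _ _) hcon))
  -- the key: gradient of F vanishes at xbar
  set c : ℝ := 1/(2*ρ) with hcdef
  have hcpos : 0 < c := by
    rw [hcdef]
    exact one_div_pos.mpr (by linarith)
  have hAc : c < A := hA
  set q : EuclideanSpace ℝ (Fin m) → ℝ := fun z => c * ‖gradient F z‖^2 + G z with hqdef
  have hqcont : Continuous q := by
    apply Continuous.add
    · exact (continuous_const.mul ((hgc.norm).pow 2))
    · exact (hG.of_le one_le_two).continuous
  have key : gradient F xbar = 0 := by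
    by_contra hne
    have hψ0 : 0 < ‖gradient F xbar‖^2 := pow_pos (norm_pos_iff.mpr hne) 2
    set B : Set (EuclideanSpace ℝ (Fin m)) := {z | F z ≤ F xbar ∧ q z ≤ q xbar} with hBdef
    have hBclosed : IsClosed B := by
      apply IsClosed.inter
      · exact isClosed_le hF1.continuous continuous_const
      · exact isClosed_le hqcont continuous_const
    have hBsub : B ⊆ closedBall xstar (max 1 ((F xbar - F xstar)/δ)) := by
      intro z hzB
      rw [mem_closedBall, dist_eq_norm]
      exact hcoerc z hzB.1
    have hBcpt : IsCompact B :=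
      (isCompact_closedBall xstar _).of_isClosed_subset hBclosed hBsub
    have hBne : B.Nonempty := ⟨xbar, le_refl _, le_refl _⟩
    obtain ⟨y, hyB, hymin⟩ := hBcpt.exists_isMinOn hBne hF1.continuous.continuousOn
    -- on B the gradient norm is bounded below
    have hψB : ∀ z ∈ B, ‖gradient F xbar‖^2 ≤ ‖gradient F z‖^2 := by
      intro z hzB
      have h1 := hxbar z
      have h2 : q z ≤ q xbar := hzB.2
      simp only [hqdef] at h2
      nlinarith
    have hgy : gradient F y ≠ 0 := by
      intro h
      have := hψB y hyB
      rw [h] at this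
      simp only [norm_zero] at this
      nlinarith
    have hψy : 0 < ‖gradient F y‖^2 := by
      have := hψB y hyB; nlinarith
    -- local solution of the gradient flow from y
    obtain ⟨x, hx0, ε, hε, hxd⟩ :=
      ContDiffAt.exists_forall_mem_closedBall_exists_eq_forall_mem_Ioo_hasDerivAt₀ (f := fun z : EuclideanSpace ℝ (Fin m) => -(gradient F z))
        (x₀ := y) (t₀ := (0:ℝ)) (hf := hg.neg.contDiffAt)
    rw [zero_sub, zero_add] at hxd
    -- derivative of F ∘ x
    have hFder : ∀ t ∈ Ioo (-ε) ε,
        HasDerivAt (fun s => F (x s)) (-‖gradient F (x t)‖^2) t := by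
      intro t ht
      have h1 := ((hFd (x t)).hasGradientAt.hasFDerivAt).comp_hasDerivAt t (hxd t ht)
      refine h1.congr_deriv ?_
      rw [InnerProductSpace.toDual_apply_apply, inner_neg_right, real_inner_self_eq_norm_sq]
    -- derivative of q ∘ x, and it is nonpositive
    have hqder : ∀ t ∈ Ioo (-ε) ε, ∃ D : ℝ, D ≤ 0 ∧
        HasDerivAt (fun s => q (x s)) D t := by
      intro t ht
      have hu : HasDerivAt (fun s => gradient F (x s))
          ((fderiv ℝ (gradient F) (x t)) (-(gradient F (x t)))) t :=
        ((hg.differentiable one_ne_zero (x t)).hasFDerivAt).comp_hasDerivAt t (hxd t ht)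
      have hinner := (hu.inner (𝕜 := ℝ) hu)
      have hGder := ((hGd (x t)).hasGradientAt.hasFDerivAt).comp_hasDerivAt t (hxd t ht)
      have hGder' : HasDerivAt (fun s => G (x s))
          (-⟪gradient F (x t), gradient G (x t)⟫) t := by
        refine hGder.congr_deriv ?_
        rw [InnerProductSpace.toDual_apply_apply, inner_neg_right, real_inner_comm]
      have hq2 : HasDerivAt (fun s => q (x s))
          (c * (⟪gradient F (x t), (fderiv ℝ (gradient F) (x t)) (-(gradient F (x t)))⟫ +
            ⟪(fderiv ℝ (gradient F) (x t)) (-(gradient F (x t))), gradient F (x t)⟫) +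
            -⟪gradient F (x t), gradient G (x t)⟫) t := by
        have heq : (fun s => q (x s)) =
            fun s => c * ⟪gradient F (x s), gradient F (x s)⟫ + G (x s) := by
          funext s
          simp only [hqdef, real_inner_self_eq_norm_sq]
        rw [heq]
        exact (hinner.const_mul c).add hGder'
      refine ⟨_, ?_, hq2⟩
      have hcondt := hcond (x t)
      set a : ℝ := ⟪gradient F (x t), fderiv ℝ (gradient F) (x t) (gradient F (x t))⟫ with hadef
      set b : ℝ := ⟪gradient F (x t), gradient G (x t)⟫ with hbdef
      have e1 : ⟪gradient F (x t), (fderiv ℝ (gradient F) (x t)) (-(gradient F (x t)))⟫ = -a := by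
        rw [map_neg, inner_neg_right, hadef]
      have e2 : ⟪(fderiv ℝ (gradient F) (x t)) (-(gradient F (x t))), gradient F (x t)⟫ = -a := by
        rw [map_neg, inner_neg_left, real_inner_comm, hadef]
      rw [e1, e2]
      have : -ρ * b ≤ a := hcondt
      have hval : c * (-a + -a) + -b = -(a/ρ) - b := by
        rw [hcdef]; field_simp; ring
      rw [hval]
      have : -(a/ρ) ≤ b := by
        rw [← neg_div, div_le_iff₀ hρ]
        nlinarith
      linarith
    -- strict decrease of F along the flow
    have hFder0 : HasDerivAt (fun s => F (x s)) (-‖gradient F y‖^2) 0 := by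
      have := hFder 0 ⟨by linarith, hε⟩
      rwa [hx0] at this
    obtain ⟨t₁, ht₁, hFt₁⟩ := aux_exists_lt_of_hasDerivAt_neg hFder0 (by nlinarith) hε
    -- q ∘ x is antitone on [0, t₁]
    have hsubIoo : Icc (0:ℝ) t₁ ⊆ Ioo (-ε) ε := by
      intro s hs
      exact ⟨by linarith [hs.1], lt_of_le_of_lt hs.2 ht₁.2⟩
    have hqanti : AntitoneOn (fun s => q (x s)) (Icc (0:ℝ) t₁) := by
      apply antitoneOn_of_deriv_nonpos (convex_Icc _ _)
      · intro s hs
        obtain ⟨D, _, hD⟩ := hqder s (hsubIoo hs)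
        exact hD.continuousAt.continuousWithinAt
      · intro s hs
        rw [interior_Icc] at hs
        obtain ⟨D, _, hD⟩ := hqder s (hsubIoo (Ioo_subset_Icc_self hs))
        exact hD.differentiableAt.differentiableWithinAt
      · intro s hs
        rw [interior_Icc] at hs
        obtain ⟨D, hD0, hD⟩ := hqder s (hsubIoo (Ioo_subset_Icc_self hs))
        rw [hD.deriv]
        exact hD0
    have hFanti : AntitoneOn (fun s => F (x s)) (Icc (0:ℝ) t₁) := by
      apply antitoneOn_of_deriv_nonpos (convex_Icc _ _)
      · intro s hs
        exact (hFder s (hsubIoo hs)).continuousAt.continuousWithinAt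
      · intro s hs
        rw [interior_Icc] at hs
        exact (hFder s (hsubIoo (Ioo_subset_Icc_self hs))).differentiableAt.differentiableWithinAt
      · intro s hs
        rw [interior_Icc] at hs
        rw [(hFder s (hsubIoo (Ioo_subset_Icc_self hs))).deriv]
        exact neg_nonpos.mpr (by positivity)
    -- x t₁ belongs to B
    have hmem : x t₁ ∈ B := by
      constructor
      · have := hFanti (Set.left_mem_Icc.mpr (le_of_lt ht₁.1))
          (Set.right_mem_Icc.mpr (le_of_lt ht₁.1)) (le_of_lt ht₁.1)
        simp only at this
        rw [hx0] at this
        exact le_trans this hyB.1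
      · have := hqanti (Set.left_mem_Icc.mpr (le_of_lt ht₁.1))
          (Set.right_mem_Icc.mpr (le_of_lt ht₁.1)) (le_of_lt ht₁.1)
        simp only at this
        rw [hx0] at this
        exact le_trans this hyB.2
    -- contradiction with minimality of y
    have : F y ≤ F (x t₁) := hymin hmem
    rw [hx0] at hFt₁
    linarith
  -- conclusion
  have hxx : xbar = xstar := huniq xbar key
  refine ⟨hxx, fun z => ?_⟩
  have := hxbar z
  rw [hxx] at this
  rw [hcrit] at this
  simpa using this
end
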